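/- The simplicial complex Γ₂B_n(ℤ) is path connected for n ≥ 2; that is, for any two primitive vectors v, w ∈ ℤⁿ that occur as columns of matrices in Γ₂(n), there is a finite sequence v = v₀, v₁, …, v_m = w such that each consecutive pair {v_i, v_{i+1}} is a pair of distinct columns of some matrix in Γ₂(n). -/

import Mathlib

open Matrix

def Gamma2 (n : ℕ) : Subgroup (GL (Fin n) ℤ) :=
  (Matrix.GeneralLinearGroup.map (n := Fin n) (Int.castRingHom (ZMod 2))).ker

/-- `v` occurs as a column of some matrix in Γ₂(n). -/
def IsGamma2Column (n : ℕ) (v : Fin n → ℤ) : Prop :=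
  ∃ A ∈ Gamma2 n, ∃ j : Fin n, (fun i => (A : Matrix (Fin n) (Fin n) ℤ) i j) = v

/-!
If `A, B ∈ Γ₂(n)` share a column, every column of `A` is joined to every column of `B` through
it. Right multiplication by a transvection `1 + 2m E_ab` keeps the `a`-th column, and with such
transvections a Euclidean algorithm clears the `i`-th row of `A` off the diagonal. The `i`-th
column `b` of the result has `b i = ±1`, so the identity with its `i`-th column replaced by `b`
lies in Γ₂(n) and shares its other columns, which are basis vectors, with the identity matrix.
So for `n ≥ 2` every Γ₂-column is joined to a basis vector, and those are pairwise adjacent.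
-/

theorem Relation.ReflTransGen.exists_fin_path {α : Type*} {r : α → α → Prop} {a b : α}
    (h : Relation.ReflTransGen r a b) :
    ∃ (m : ℕ) (p : Fin (m + 1) → α),
      p 0 = a ∧ p (Fin.last m) = b ∧ ∀ i : Fin m, r (p i.castSucc) (p i.succ) := by
  induction h with
  | refl => exact ⟨0, fun _ => a, rfl, rfl, Fin.elim0⟩
  | tail _ hcd ih =>
    obtain ⟨m, p, hp0, hpm, hp⟩ := ih
    refine ⟨m + 1, Fin.snoc p _, by simpa using hp0, Fin.snoc_last _ _, Fin.lastCases ?_ ?_⟩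
    · simpa [hpm] using hcd
    · intro i
      rw [Fin.succ_castSucc, Fin.snoc_castSucc, Fin.snoc_castSucc]
      exact hp i

theorem Matrix.det_one_updateCol {R ι : Type*} [CommRing R] [Fintype ι] [DecidableEq ι]
    (i : ι) (b : ι → R) : ((1 : Matrix ι ι R).updateCol i b).det = b i := by
  have hb : (fun l => ∑ k, b k • (1 : Matrix ι ι R) l k) = b := by
    ext l; simp [one_apply]
  conv_lhs => rw [← hb]
  rw [det_updateCol_sum, det_one, smul_eq_mul, mul_one]

theorem Int.exists_natAbs_add_two_mul_lt {x y : ℤ} (hx : x ≠ 0) (h : x.natAbs < y.natAbs) :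
    ∃ m : ℤ, (y + 2 * m * x).natAbs < y.natAbs := by
  rcases le_or_gt 0 x with hx0 | hx0 <;> rcases le_or_gt 0 y with hy0 | hy0
  · exact ⟨-1, by omega⟩
  · exact ⟨1, by omega⟩
  · exact ⟨1, by omega⟩
  · exact ⟨-1, by omega⟩

section

variable {n : ℕ}

theorem mem_Gamma2_iff {A : GL (Fin n) ℤ} :
    A ∈ Gamma2 n ↔ (A : Matrix (Fin n) (Fin n) ℤ).map (Int.cast : ℤ → ZMod 2) = 1 := by
  rw [Gamma2, MonoidHom.mem_ker, Units.ext_iff]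
  rfl

theorem exists_mem_Gamma2_coe_eq {M : Matrix (Fin n) (Fin n) ℤ} (hdet : IsUnit M.det)
    (hM : M.map (Int.cast : ℤ → ZMod 2) = 1) :
    ∃ A ∈ Gamma2 n, (A : Matrix (Fin n) (Fin n) ℤ) = M :=
  ⟨nonsingInvUnit M hdet, mem_Gamma2_iff.2 hM, rfl⟩

theorem intCast_apply_of_mem_Gamma2 {A : GL (Fin n) ℤ} (hA : A ∈ Gamma2 n) (i j : Fin n) :
    ((A : Matrix (Fin n) (Fin n) ℤ) i j : ZMod 2) = (1 : Matrix (Fin n) (Fin n) (ZMod 2)) i j :=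
  congrFun₂ (mem_Gamma2_iff.1 hA) i j

theorem odd_apply_self_of_mem_Gamma2 {A : GL (Fin n) ℤ} (hA : A ∈ Gamma2 n) (i : Fin n) :
    Odd ((A : Matrix (Fin n) (Fin n) ℤ) i i) := by
  simpa [ZMod.intCast_eq_one_iff_odd] using intCast_apply_of_mem_Gamma2 hA i i

theorem even_apply_of_mem_Gamma2 {A : GL (Fin n) ℤ} (hA : A ∈ Gamma2 n) {i j : Fin n}
    (hij : i ≠ j) : Even ((A : Matrix (Fin n) (Fin n) ℤ) i j) := by
  simpa [hij, ZMod.intCast_eq_zero_iff_even] using intCast_apply_of_mem_Gamma2 hA i j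

theorem exists_mem_Gamma2_coe_eq_transvection {a b : Fin n} (hab : a ≠ b) (m : ℤ) :
    ∃ T ∈ Gamma2 n, (T : Matrix (Fin n) (Fin n) ℤ) = transvection a b (2 * m) := by
  refine exists_mem_Gamma2_coe_eq (by simp [hab]) ?_
  ext r s
  simp [transvection, single_apply, one_apply, Int.cast_ite, show (2 : ZMod 2) = 0 from rfl]

theorem exists_mem_Gamma2_coe_eq_updateCol {A : GL (Fin n) ℤ} (hA : A ∈ Gamma2 n) {i : Fin n}
    (hi : IsUnit ((A : Matrix (Fin n) (Fin n) ℤ) i i)) :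
    ∃ U ∈ Gamma2 n, (U : Matrix (Fin n) (Fin n) ℤ) = (1 : Matrix (Fin n) (Fin n) ℤ).updateCol i
      (fun l => (A : Matrix (Fin n) (Fin n) ℤ) l i) := by
  refine exists_mem_Gamma2_coe_eq (by rwa [det_one_updateCol]) ?_
  ext r s
  by_cases hs : s = i
  · subst hs; simp [intCast_apply_of_mem_Gamma2 hA]
  · simp [hs, one_apply]

theorem isUnit_apply_self_of_row_eq_zero {A : GL (Fin n) ℤ} {i : Fin n}
    (hrow : ∀ s, s ≠ i → (A : Matrix (Fin n) (Fin n) ℤ) i s = 0) :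
    IsUnit ((A : Matrix (Fin n) (Fin n) ℤ) i i) := by
  have h := congrFun₂ A.val_inv i i
  rw [mul_apply, Finset.sum_eq_single i (fun s _ hs => by rw [hrow s hs, zero_mul])
    (by simp), one_apply_eq] at h
  exact IsUnit.of_mul_eq_one _ h

namespace Gamma2B

def Adj (n : ℕ) (v w : Fin n → ℤ) : Prop :=
  ∃ A ∈ Gamma2 n, ∃ j k : Fin n, j ≠ k ∧
    (fun l => (A : Matrix (Fin n) (Fin n) ℤ) l j) = v ∧
    (fun l => (A : Matrix (Fin n) (Fin n) ℤ) l k) = w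

def Reachable (n : ℕ) : (Fin n → ℤ) → (Fin n → ℤ) → Prop :=
  Relation.ReflTransGen (Adj n)

theorem Adj.symm {v w : Fin n → ℤ} (h : Adj n v w) : Adj n w v :=
  let ⟨A, hA, j, k, hjk, hv, hw⟩ := h
  ⟨A, hA, k, j, hjk.symm, hw, hv⟩

instance : Std.Symm (Adj n) := ⟨fun _ _ => Adj.symm⟩

theorem Reachable.symm {v w : Fin n → ℤ} (h : Reachable n v w) : Reachable n w v :=
  Std.Symm.symm (r := Relation.ReflTransGen (Adj n)) _ _ h

theorem Reachable.trans {u v w : Fin n → ℤ} (huv : Reachable n u v) (hvw : Reachable n v w) :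
    Reachable n u w :=
  Relation.ReflTransGen.trans huv hvw

def col (A : GL (Fin n) ℤ) (j : Fin n) : Fin n → ℤ :=
  fun l => (A : Matrix (Fin n) (Fin n) ℤ) l j

theorem reachable_col_col {A : GL (Fin n) ℤ} (hA : A ∈ Gamma2 n) (s t : Fin n) :
    Reachable n (col A s) (col A t) := by
  obtain rfl | hst := eq_or_ne s t
  · exact Relation.ReflTransGen.refl
  · exact Relation.ReflTransGen.single ⟨A, hA, s, t, hst, rfl, rfl⟩

theorem reachable_col_of_col_eq {A B : GL (Fin n) ℤ} (hA : A ∈ Gamma2 n) (hB : B ∈ Gamma2 n)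
    {a : Fin n} (hAB : col A a = col B a) (s t : Fin n) : Reachable n (col A s) (col B t) :=
  (reachable_col_col hA s a).trans (hAB ▸ reachable_col_col hB a t)

def rowWeight (A : GL (Fin n) ℤ) (i : Fin n) : ℕ :=
  ∑ s, ((A : Matrix (Fin n) (Fin n) ℤ) i s).natAbs

theorem exists_reachable_rowWeight_lt_of_mul_transvection {A : GL (Fin n) ℤ} (hA : A ∈ Gamma2 n)
    {i a b : Fin n} (hab : a ≠ b) {m : ℤ}
    (hm : ((A : Matrix (Fin n) (Fin n) ℤ) i b + 2 * m * (A : Matrix (Fin n) (Fin n) ℤ) i a).natAbs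
      < ((A : Matrix (Fin n) (Fin n) ℤ) i b).natAbs) :
    ∃ A' ∈ Gamma2 n, Reachable n (col A i) (col A' i) ∧ rowWeight A' i < rowWeight A i := by
  obtain ⟨T, hT, hTval⟩ := exists_mem_Gamma2_coe_eq_transvection hab m
  have hAT : ((A * T : GL (Fin n) ℤ) : Matrix (Fin n) (Fin n) ℤ)
      = (A : Matrix (Fin n) (Fin n) ℤ) * transvection a b (2 * m) := by
    rw [Units.val_mul, hTval]
  refine ⟨A * T, mul_mem hA hT, reachable_col_of_col_eq hA (mul_mem hA hT) (a := a) ?_ i i, ?_⟩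
  · ext l
    simp [col, hAT, hab]
  · refine Finset.sum_lt_sum (fun s _ => ?_) ⟨b, Finset.mem_univ _, by simpa [hAT] using hm⟩
    obtain rfl | hsb := eq_or_ne s b
    · simpa [hAT] using hm.le
    · simp [hAT, hsb]

theorem exists_reachable_rowWeight_lt {A : GL (Fin n) ℤ} (hA : A ∈ Gamma2 n) {i b : Fin n}
    (hbi : b ≠ i) (hb : (A : Matrix (Fin n) (Fin n) ℤ) i b ≠ 0) :
    ∃ A' ∈ Gamma2 n, Reachable n (col A i) (col A' i) ∧ rowWeight A' i < rowWeight A i := by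
  -- the diagonal entry is odd and `A i b` is even, so their absolute values differ
  have hodd := Int.odd_iff.1 (odd_apply_self_of_mem_Gamma2 hA i)
  have heven := Int.even_iff.1 (even_apply_of_mem_Gamma2 hA hbi.symm)
  rcases lt_or_gt_of_ne (a := ((A : Matrix (Fin n) (Fin n) ℤ) i i).natAbs)
    (b := ((A : Matrix (Fin n) (Fin n) ℤ) i b).natAbs) (by omega) with hlt | hgt
  · obtain ⟨m, hm⟩ := Int.exists_natAbs_add_two_mul_lt (by omega) hlt
    exact exists_reachable_rowWeight_lt_of_mul_transvection hA hbi.symm hm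
  · obtain ⟨m, hm⟩ := Int.exists_natAbs_add_two_mul_lt hb hgt
    exact exists_reachable_rowWeight_lt_of_mul_transvection hA hbi hm

theorem exists_reachable_row_eq_zero {A : GL (Fin n) ℤ} (hA : A ∈ Gamma2 n) (i : Fin n) :
    ∃ B ∈ Gamma2 n, Reachable n (col A i) (col B i) ∧
      ∀ s, s ≠ i → (B : Matrix (Fin n) (Fin n) ℤ) i s = 0 := by
  induction hw : rowWeight A i using Nat.strong_induction_on generalizing A with
  | _ w ih =>
    by_cases hrow : ∀ s, s ≠ i → (A : Matrix (Fin n) (Fin n) ℤ) i s = 0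
    · exact ⟨A, hA, Relation.ReflTransGen.refl, hrow⟩
    push Not at hrow
    obtain ⟨b, hbi, hb⟩ := hrow
    obtain ⟨A', hA', hAA', hlt⟩ := exists_reachable_rowWeight_lt hA hbi hb
    obtain ⟨B, hB, hA'B, hrowB⟩ := ih _ (hw ▸ hlt) hA' rfl
    exact ⟨B, hB, hAA'.trans hA'B, hrowB⟩

theorem reachable_col_one {A : GL (Fin n) ℤ} (hA : A ∈ Gamma2 n) {i k : Fin n} (hki : k ≠ i) :
    Reachable n (col A i) (col 1 k) := by
  obtain ⟨B, hB, hAB, hrow⟩ := exists_reachable_row_eq_zero hA i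
  obtain ⟨U, hU, hUval⟩ :=
    exists_mem_Gamma2_coe_eq_updateCol hB (isUnit_apply_self_of_row_eq_zero hrow)
  have hBU : col B i = col U i := by
    ext l
    simp [col, hUval]
  have hU1 : col U k = col 1 k := by
    ext l
    simp [col, hUval, hki]
  exact hAB.trans (hU1 ▸ reachable_col_of_col_eq hB hU hBU i k)

theorem reachable_of_isGamma2Column (hn : 2 ≤ n) {v w : Fin n → ℤ} (hv : IsGamma2Column n v)
    (hw : IsGamma2Column n w) : Reachable n v w := by
  have : Nontrivial (Fin n) := Fin.nontrivial_iff_two_le.2 hn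
  obtain ⟨A, hA, i, rfl⟩ := hv
  obtain ⟨B, hB, j, rfl⟩ := hw
  obtain ⟨k, hki⟩ := exists_ne i
  obtain ⟨l, hlj⟩ := exists_ne j
  exact (reachable_col_one hA hki).trans
    ((reachable_col_col (one_mem _) k l).trans (reachable_col_one hB hlj).symm)

end Gamma2B

end

/-- The complex Γ₂B_n(ℤ) is path connected for n ≥ 2. -/
theorem gamma2_complex_path_connected (n : ℕ) (hn : 2 ≤ n)
    (v w : Fin n → ℤ) (hv : IsGamma2Column n v) (hw : IsGamma2Column n w) :
    ∃ (m : ℕ) (p : Fin (m + 1) → (Fin n → ℤ)),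
      p 0 = v ∧ p (Fin.last m) = w ∧
      ∀ i : Fin m, ∃ A ∈ Gamma2 n, ∃ j k : Fin n, j ≠ k ∧
        (fun l => (A : Matrix (Fin n) (Fin n) ℤ) l j) = p i.castSucc ∧
        (fun l => (A : Matrix (Fin n) (Fin n) ℤ) l k) = p i.succ :=
  (Gamma2B.reachable_of_isGamma2Column hn hv hw).exists_fin_path
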